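/- Uniform geometric decay of powers of the BDF3 companion matrix: let 0 < s₀ < 1/11 and let M(s) be the real 3×3 matrix with rows (18s, −9s, 2s), (1, 0, 0), (0, 1, 0). There exist constants K₁ > 0 and ρ₁ ∈ (0,1), depending only on s₀, such that for every s ∈ (0, s₀], every integer n ≥ 0, and every x ∈ ℝ³ with |x| = 1, one has |M(s)^{n} x| ≤ K₁ ρ₁^{n}. -/
import Mathlib


noncomputable section

/-- The BDF3 companion matrix with rows `(18s, -9s, 2s)`, `(1,0,0)`, `(0,1,0)`. -/
def M (s : ℝ) : Matrix (Fin 3) (Fin 3) ℝ :=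
  !![18 * s, -9 * s, 2 * s; 1, 0, 0; 0, 1, 0]

/-- The Euclidean norm on `ℝ³`. -/
def enorm3 (v : Fin 3 → ℝ) : ℝ := Real.sqrt (∑ i, v i ^ 2)

def bdf3seq (s : ℝ) (x : Fin 3 → ℝ) : ℕ → ℝ
  | 0 => x 2
  | 1 => x 1
  | 2 => x 0
  | (n+3) => s * (18 * bdf3seq s x (n+2) - 9 * bdf3seq s x (n+1) + 2 * bdf3seq s x n)

lemma bdf3_mulVec (s : ℝ) (x : Fin 3 → ℝ) (n : ℕ) :
    (M s ^ n).mulVec x = ![bdf3seq s x (n+2), bdf3seq s x (n+1), bdf3seq s x n] := by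
  induction n with
  | zero =>
      rw [pow_zero, Matrix.one_mulVec]
      funext i; fin_cases i <;> simp [bdf3seq]
  | succ n ih =>
      rw [pow_succ', ← Matrix.mulVec_mulVec, ih]
      funext i
      fin_cases i <;>
        simp [M, Matrix.mulVec, dotProduct, bdf3seq, Fin.sum_univ_three] <;> ring

set_option maxHeartbeats 1000000 in
/-- uniform geometric decay of powers of the BDF3 companion
matrix. For `0 < s₀ < 1/11` there exist `K₁ > 0` and `ρ₁ ∈ (0,1)`, depending
only on `s₀`, such that `|M(s)ⁿ x| ≤ K₁ ρ₁ⁿ` for all `0 < s ≤ s₀`, all `n ≥ 0`,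
and all unit `x ∈ ℝ³`. -/
theorem companion_power_geometric_decay (s₀ : ℝ) (hs₀ : 0 < s₀)
    (hs₀' : s₀ < 1 / 11) :
    ∃ (K₁ ρ₁ : ℝ), 0 < K₁ ∧ 0 < ρ₁ ∧ ρ₁ < 1 ∧
      ∀ s : ℝ, 0 < s → s ≤ s₀ → ∀ n : ℕ, ∀ x : Fin 3 → ℝ, enorm3 x = 1 →
        enorm3 ((M s ^ n).mulVec x) ≤ K₁ * ρ₁ ^ n := by
  obtain ⟨rb, hrb_def⟩ : ∃ rb : ℝ, rb = (3 + 11 * s₀) / 4 := ⟨_, rfl⟩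
  have hrb_pos : (0:ℝ) < rb := by rw [hrb_def]; positivity
  have hrb_lt1 : rb < 1 := by rw [hrb_def]; linarith
  obtain ⟨ρ, hρ_def⟩ : ∃ ρ : ℝ, ρ = max rb (175/176) := ⟨_, rfl⟩
  have hρ_lt1 : ρ < 1 := by
    rw [hρ_def]; apply max_lt hrb_lt1; norm_num
  have hρ_ge : (175/176 : ℝ) ≤ ρ := hρ_def ▸ le_max_right _ _
  have hρ_pos : (0:ℝ) < ρ := lt_of_lt_of_le (by norm_num) hρ_ge
  have hrbρ : rb ≤ ρ := hρ_def ▸ le_max_left _ _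
  refine ⟨528, ρ, by norm_num, hρ_pos, hρ_lt1, ?_⟩
  intro s hs hss₀ n x hx
  -- entries of x are bounded by 1
  have hxsum : (∑ i, x i ^ 2) = 1 := by
    have h0 : (0:ℝ) ≤ ∑ i, x i ^ 2 := by positivity
    have := hx
    rw [enorm3] at this
    nlinarith [Real.sq_sqrt h0, this]
  have hxi : ∀ i, |x i| ≤ 1 := by
    intro i
    rw [abs_le]
    have hle : x i ^ 2 ≤ 1 := by
      rw [← hxsum]
      exact Finset.single_le_sum (f := fun j => x j ^ 2)
        (fun j _ => sq_nonneg _) (Finset.mem_univ i)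
    constructor <;> nlinarith
  -- real root of the characteristic cubic via IVT
  have hcont : ContinuousOn (fun t : ℝ => t^3 - s * (18*t^2 - 9*t + 2)) (Set.Icc 0 rb) :=
    (Continuous.continuousOn (by
      exact (continuous_pow 3).sub (continuous_const.mul
        (((continuous_const.mul (continuous_pow 2)).sub
          (continuous_const.mul continuous_id)).add continuous_const))))
  have hp0 : (fun t : ℝ => t^3 - s * (18*t^2 - 9*t + 2)) 0 < 0 := by
    simp; nlinarith
  have hprb : (0:ℝ) < (fun t : ℝ => t^3 - s * (18*t^2 - 9*t + 2)) rb := by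
    simp only
    have h1 : rb^3 - s₀ * (18*rb^2 - 9*rb + 2) > 0 := by
      rw [hrb_def]; nlinarith [sq_nonneg s₀, sq_nonneg (1 - 11*s₀), hs₀, hs₀']
    have hg : 18*rb^2 - 9*rb + 2 > 0 := by nlinarith [sq_nonneg (6*rb - 3/2)]
    nlinarith
  obtain ⟨r, hrmem, hr⟩ : ∃ r ∈ Set.Ioo (0:ℝ) rb,
      (fun t : ℝ => t^3 - s * (18*t^2 - 9*t + 2)) r = 0 := by
    have := intermediate_value_Ioo (le_of_lt hrb_pos) hcont
      (Set.mem_Ioo.mpr ⟨hp0, hprb⟩)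
    obtain ⟨r, hr1, hr2⟩ := this
    exact ⟨r, hr1, hr2⟩
  simp only at hr
  obtain ⟨hr0, hrrb⟩ := hrmem
  have hroot : r^3 = s * (18*r^2 - 9*r + 2) := by linarith
  clear hr hcont hp0 hprb hx
  have hr1 : r < 1 := lt_trans hrrb hrb_lt1
  have hrρ : r ≤ ρ := le_trans (le_of_lt hrrb) hrbρ
  -- factorization coefficients
  obtain ⟨b, hb_def⟩ : ∃ b : ℝ, b = r - 18 * s := ⟨_, rfl⟩
  obtain ⟨c, hc_def⟩ : ∃ c : ℝ, c = r * b + 9 * s := ⟨_, rfl⟩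
  have hrc : r * c = 2 * s := by rw [hc_def, hb_def]; nlinarith
  have hc_pos : 0 < c := by nlinarith
  -- key inequality |b| + c ≤ 43/44
  have hg_pos : 0 < 18*r^2 - 9*r + 2 := by nlinarith [sq_nonneg (6*r - 3/2)]
  have hs_eq : s * (18*r^2 - 9*r + 2) = r^3 := hroot.symm
  have hbc : |b| + c ≤ 43/44 := by
    have hcval : c * (18*r^2 - 9*r + 2) = 2*r^2 := by
      have : r * (c * (18*r^2 - 9*r + 2)) = r * (2*r^2) := by
        have : (r * c) * (18*r^2 - 9*r + 2) = 2 * s * (18*r^2 - 9*r + 2) := by rw [hrc]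
        nlinarith [this, hs_eq]
      exact mul_left_cancel₀ (ne_of_gt hr0) this
    have hbval : b * (18*r^2 - 9*r + 2) = r * (2 - 9*r) := by
      rw [hb_def]; nlinarith [hs_eq]
    rcases abs_cases b with ⟨h1, _⟩ | ⟨h1, _⟩
    · -- |b| = b : need b + c ≤ 43/44, i.e. (b+c) g ≤ (43/44) g
      rw [h1]
      nlinarith [hbval, hcval, hg_pos, sq_nonneg r, sq_nonneg (r - 1)]
    · rw [h1]
      nlinarith [hbval, hcval, hg_pos, sq_nonneg (290*r - 299/2)]
  have hb_abs : 0 ≤ |b| := abs_nonneg b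
  -- the scalar sequence
  obtain ⟨a, ha_def⟩ : ∃ a : ℕ → ℝ, a = bdf3seq s x := ⟨_, rfl⟩
  have ha0 : |a 0| ≤ 1 := by rw [ha_def]; exact hxi 2
  have ha1 : |a 1| ≤ 1 := by rw [ha_def]; exact hxi 1
  have ha2 : |a 2| ≤ 1 := by rw [ha_def]; exact hxi 0
  obtain ⟨y0, hy0_def⟩ : ∃ y0 : ℝ, y0 = a 2 + b * a 1 + c * a 0 := ⟨_, rfl⟩
  have hy0 : |y0| ≤ 2 := by
    calc |y0| ≤ |a 2| + |b * a 1| + |c * a 0| := by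
          rw [hy0_def]; exact (abs_add_three _ _ _)
    _ ≤ 1 + |b| * 1 + c * 1 := by
          rw [abs_mul, abs_mul, abs_of_pos hc_pos]
          gcongr <;> first | exact ha2 | exact ha1 | exact ha0 | exact abs_nonneg _ | exact le_of_lt hc_pos
    _ ≤ 2 := by nlinarith
  have hy : ∀ k, a (k+2) + b * a (k+1) + c * a k = r ^ k * y0 := by
    intro k
    induction k with
    | zero => rw [hy0_def, pow_zero, one_mul]
    | succ k ih =>
        have hrec : a (k+3) = s * (18 * a (k+2) - 9 * a (k+1) + 2 * a k) := by rw [ha_def]; rfl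
        have : a (k+3) + b * a (k+2) + c * a (k+1)
            = r * (a (k+2) + b * a (k+1) + c * a k) := by
          rw [hrec, hc_def, hb_def]
          linear_combination (-(a k)) * hroot
        rw [this, ih, pow_succ]; ring
  -- main induction
  have hbound : ∀ n, |a n| ≤ 176 * ρ ^ n := by
    intro n
    induction n using Nat.strong_induction_on with
    | _ n ih =>
      match n with
      | 0 => simpa using le_trans ha0 (by norm_num)
      | 1 =>
          have : (175/176 : ℝ) ≤ ρ ^ 1 := by simpa using hρ_ge
          calc |a 1| ≤ 1 := ha1
          _ ≤ 176 * ρ ^ 1 := by nlinarith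
      | (m+2) =>
          have hstep : a (m+2) = r ^ m * y0 - b * a (m+1) - c * a m := by
            have := hy m; linarith
          have ih1 : |a (m+1)| ≤ 176 * ρ ^ (m+1) := ih (m+1) (by omega)
          have ih0 : |a m| ≤ 176 * ρ ^ m := ih m (by omega)
          have hrpow : r ^ m ≤ ρ ^ m := pow_le_pow_left₀ (le_of_lt hr0) hrρ m
          have hρpow : (0:ℝ) < ρ ^ m := pow_pos hρ_pos m
          have habs : |a (m+2)| ≤ r ^ m * |y0| + |b| * |a (m+1)| + c * |a m| := by
            rw [hstep]
            calc |r ^ m * y0 - b * a (m+1) - c * a m|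
                ≤ |r ^ m * y0| + |b * a (m+1)| + |c * a m| := by
                  have := abs_add_three (r ^ m * y0) (-(b * a (m+1))) (-(c * a m))
                  simp only [abs_neg] at this
                  calc |r ^ m * y0 - b * a (m+1) - c * a m|
                      = |r ^ m * y0 + -(b * a (m+1)) + -(c * a m)| := by ring_nf
                  _ ≤ _ := this
            _ = r ^ m * |y0| + |b| * |a (m+1)| + c * |a m| := by
                  rw [abs_mul, abs_mul, abs_mul, abs_of_pos hc_pos,
                    abs_of_nonneg (pow_nonneg (le_of_lt hr0) m)]
          have hρsq : (43:ℝ)/44 + 2/176 ≤ ρ ^ 2 := by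
            have : (175/176:ℝ)^2 ≤ ρ^2 := by
              apply pow_le_pow_left₀ (by norm_num) hρ_ge
            nlinarith
          have hbρ : |b| * ρ + c ≤ 43/44 := by
            nlinarith [hρ_lt1, hρ_pos, hb_abs, hbc, hc_pos]
          calc |a (m+2)| ≤ r ^ m * |y0| + |b| * |a (m+1)| + c * |a m| := habs
          _ ≤ ρ ^ m * 2 + |b| * (176 * ρ ^ (m+1)) + c * (176 * ρ ^ m) := by
                gcongr <;> first | exact hrpow | exact hy0 | exact ih1 | exact ih0 | exact abs_nonneg _ | exact le_of_lt hc_pos | exact pow_nonneg (le_of_lt hr0) m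
          _ = (2 + 176 * (|b| * ρ + c)) * ρ ^ m := by ring
          _ ≤ (176 * ρ ^ 2) * ρ ^ m := by
                apply mul_le_mul_of_nonneg_right _ (le_of_lt hρpow)
                nlinarith
          _ = 176 * ρ ^ (m+2) := by ring
  -- conclude
  rw [bdf3_mulVec, ← ha_def]
  have hsum : enorm3 ![a (n+2), a (n+1), a n]
      ≤ |a (n+2)| + |a (n+1)| + |a n| := by
    rw [enorm3, Fin.sum_univ_three]
    simp only [Matrix.cons_val_zero, Matrix.cons_val_one, Matrix.head_cons,
      Matrix.cons_val_two, Matrix.tail_cons]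
    have hnn : 0 ≤ |a (n+2)| + |a (n+1)| + |a n| := by positivity
    calc Real.sqrt (a (n+2)^2 + a (n+1)^2 + a n^2)
        ≤ Real.sqrt ((|a (n+2)| + |a (n+1)| + |a n|)^2) := by
          apply Real.sqrt_le_sqrt
          nlinarith [abs_nonneg (a (n+2)), abs_nonneg (a (n+1)), abs_nonneg (a n),
            sq_abs (a (n+2)), sq_abs (a (n+1)), sq_abs (a n)]
    _ = |a (n+2)| + |a (n+1)| + |a n| := Real.sqrt_sq hnn
  have hmono2 : ρ ^ (n+2) ≤ ρ ^ n :=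
    pow_le_pow_of_le_one (le_of_lt hρ_pos) (le_of_lt hρ_lt1) (by omega)
  have hmono1 : ρ ^ (n+1) ≤ ρ ^ n :=
    pow_le_pow_of_le_one (le_of_lt hρ_pos) (le_of_lt hρ_lt1) (by omega)
  calc enorm3 ![a (n+2), a (n+1), a n] ≤ |a (n+2)| + |a (n+1)| + |a n| := hsum
  _ ≤ 176 * ρ ^ (n+2) + 176 * ρ ^ (n+1) + 176 * ρ ^ n := by
        gcongr <;> [exact hbound (n+2); exact hbound (n+1); exact hbound n]
  _ ≤ 528 * ρ ^ n := by nlinarith
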